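/- arXiv:2501.16499 — 2 statements merged into one kernel-verified Lean document; each statement's English description precedes it below -/
import Mathlib

section
/- If u ∈ H²(D; ℝ³) with |u(x)| = 1 a.e. on an interval D, then ‖∂ₓ²u‖²_{L²} = ‖u × ∂ₓ²u‖²_{L²} + ‖∂ₓu‖⁴_{L⁴}. -/
/-!
Since `u` is continuous on `D`, `u ⬝ᵥ u = 1` holds everywhere there, and differentiating it
twice gives `u ⬝ᵥ u' = 0` and then `u ⬝ᵥ u'' = -|u'|²`. Lagrange's identity
`|u × u''|² = |u|²|u''|² - (u ⬝ᵥ u'')²` then becomes the pointwise identity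
`|u''|² = |u × u''|² + |u'|⁴`, which integrates to the claim: both terms on the right are
nonnegative and dominated by the integrable `|u''|²`.
-/

open Matrix MeasureTheory Set

theorem HasDerivAt.dotProduct {𝕜 ι : Type*} [NontriviallyNormedField 𝕜]
    [Fintype ι] {f g : 𝕜 → ι → 𝕜} {f' g' : ι → 𝕜} {x : 𝕜}
    (hf : HasDerivAt f f' x) (hg : HasDerivAt g g' x) :
    HasDerivAt (fun y => f y ⬝ᵥ g y) (f' ⬝ᵥ g x + f x ⬝ᵥ g') x := by
  have h := HasDerivAt.fun_sum (u := Finset.univ) fun i _ =>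
    (hasDerivAt_pi.1 hf i).mul (hasDerivAt_pi.1 hg i)
  rw [Finset.sum_add_distrib] at h
  exact h

theorem HasDerivAt.eq_zero_of_eqOn_const {𝕜 F : Type*} [NontriviallyNormedField 𝕜]
    [NormedAddCommGroup F] [NormedSpace 𝕜 F] {f : 𝕜 → F} {f' c : F} {s : Set 𝕜} {x : 𝕜}
    (hs : IsOpen s) (hfs : EqOn f (fun _ => c) s)
    (hx : x ∈ s) (hf : HasDerivAt f f' x) : f' = 0 :=
  hf.unique <| (hasDerivAt_const x c).congr_of_eventuallyEq <|
    Filter.eventuallyEq_of_mem (hs.mem_nhds hx) hfs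

theorem dotProduct_snd_deriv_eq_neg_of_dotProduct_self_eqOn_const {ι : Type*} [Fintype ι]
    {u u' u'' : ℝ → ι → ℝ} {s : Set ℝ} {c : ℝ} (hs : IsOpen s)
    (hu : ∀ x ∈ s, HasDerivAt u (u' x) x) (hu' : ∀ x ∈ s, HasDerivAt u' (u'' x) x)
    (hc : EqOn (fun x => u x ⬝ᵥ u x) (fun _ => c) s) :
    EqOn (fun x => u x ⬝ᵥ u'' x) (fun x => -(u' x ⬝ᵥ u' x)) s := by
  have horth : EqOn (fun x => u x ⬝ᵥ u' x) (fun _ => 0) s := fun x hx => by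
    have h := ((hu x hx).dotProduct (hu x hx)).eq_zero_of_eqOn_const hs hc hx
    rw [dotProduct_comm (u' x)] at h
    simpa using h
  intro x hx
  have h := ((hu x hx).dotProduct (hu' x hx)).eq_zero_of_eqOn_const hs horth hx
  dsimp only
  linarith

theorem MeasureTheory.MemLp.integrable_dotProduct_self {α ι : Type*} [MeasurableSpace α]
    {μ : Measure α} [Fintype ι] {v : α → ι → ℝ} (hv : MemLp v 2 μ) :
    Integrable (fun x => v x ⬝ᵥ v x) μ := by
  simpa only [dotProduct, ← sq] using
    integrable_finsetSum _ fun i _ => (hv.eval i).integrable_sq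

theorem integral_eq_add_of_ae_eq_add_of_nonneg {α : Type*} [MeasurableSpace α] {μ : Measure α}
    {f g h : α → ℝ} (hf : Integrable f μ) (hfgh : f =ᵐ[μ] g + h) (hg : 0 ≤ᵐ[μ] g)
    (hh : 0 ≤ᵐ[μ] h) (hhm : AEStronglyMeasurable h μ) :
    ∫ x, f x ∂μ = ∫ x, g x ∂μ + ∫ x, h x ∂μ := by
  have hhi : Integrable h μ := hf.mono' hhm <| by
    filter_upwards [hfgh, hg, hh] with x hx hgx hhx
    rw [Real.norm_of_nonneg hhx, hx, Pi.add_apply]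
    exact le_add_of_nonneg_left hgx
  have hgi : Integrable g μ := (hf.sub hhi).congr <| by
    filter_upwards [hfgh] with x hx
    simp [hx]
  rw [integral_congr_ae hfgh, integral_add' hgi hhi]

theorem energy_identity_general (a b : ℝ) (u u' u'' : ℝ → (Fin 3 → ℝ))
    (hderiv : ∀ x ∈ Ioo a b, HasDerivAt u (u' x) x)
    (hderiv' : ∀ x ∈ Ioo a b, HasDerivAt u' (u'' x) x)
    (hu''2 : MemLp u'' 2 (volume.restrict (Ioo a b)))
    (hunit : ∀ᵐ x ∂(volume.restrict (Ioo a b)), u x ⬝ᵥ u x = 1) :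
    ∫ x in Ioo a b, u'' x ⬝ᵥ u'' x
      = (∫ x in Ioo a b, (crossProduct (u x) (u'' x)) ⬝ᵥ (crossProduct (u x) (u'' x)))
        + ∫ x in Ioo a b, (u' x ⬝ᵥ u' x) ^ 2 := by
  have hunit_on : EqOn (fun x => u x ⬝ᵥ u x) (fun _ => 1) (Ioo a b) :=
    Measure.eqOn_open_of_ae_eq hunit isOpen_Ioo
      (fun x hx => ((hderiv x hx).dotProduct (hderiv x hx)).continuousAt.continuousWithinAt)
      continuousOn_const
  have hsnd := dotProduct_snd_deriv_eq_neg_of_dotProduct_self_eqOn_const isOpen_Ioo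
    hderiv hderiv' hunit_on
  have hpt : ∀ x ∈ Ioo a b, u'' x ⬝ᵥ u'' x =
      (crossProduct (u x) (u'' x)) ⬝ᵥ (crossProduct (u x) (u'' x)) + (u' x ⬝ᵥ u' x) ^ 2 := by
    intro x hx
    have hnorm : u x ⬝ᵥ u x = 1 := hunit_on hx
    have hdot : u x ⬝ᵥ u'' x = -(u' x ⬝ᵥ u' x) := hsnd hx
    rw [cross_dot_cross, hnorm, dotProduct_comm (u'' x) (u x), hdot]
    ring
  have hmeas : AEStronglyMeasurable (fun x => (u' x ⬝ᵥ u' x) ^ 2) (volume.restrict (Ioo a b)) :=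
    ContinuousOn.aestronglyMeasurable (fun x hx =>
      (((hderiv' x hx).dotProduct (hderiv' x hx)).continuousAt.pow 2).continuousWithinAt)
      measurableSet_Ioo
  exact integral_eq_add_of_ae_eq_add_of_nonneg hu''2.integrable_dotProduct_self
    ((ae_restrict_iff' measurableSet_Ioo).2 (.of_forall hpt))
    (.of_forall fun x => Finset.sum_nonneg fun i _ => mul_self_nonneg _)
    (.of_forall fun x => sq_nonneg _) hmeas

/-- If `u ∈ H²(D; ℝ³)` with `|u(x)| = 1` a.e. on an interval `D`, then
`‖∂ₓ²u‖²_{L²} = ‖u × ∂ₓ²u‖²_{L²} + ‖∂ₓu‖⁴_{L⁴}`. -/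
theorem energy_identity (a b : ℝ) (hab : a < b) (u u' u'' : ℝ → (Fin 3 → ℝ))
    (hderiv : ∀ x ∈ Ioo a b, HasDerivAt u (u' x) x)
    (hderiv' : ∀ x ∈ Ioo a b, HasDerivAt u' (u'' x) x)
    (hu2 : MemLp u 2 (volume.restrict (Ioo a b)))
    (hu'2 : MemLp u' 2 (volume.restrict (Ioo a b)))
    (hu''2 : MemLp u'' 2 (volume.restrict (Ioo a b)))
    (hunit : ∀ᵐ x ∂(volume.restrict (Ioo a b)), u x ⬝ᵥ u x = 1) :
    ∫ x in Ioo a b, u'' x ⬝ᵥ u'' x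
      = (∫ x in Ioo a b, (crossProduct (u x) (u'' x)) ⬝ᵥ (crossProduct (u x) (u'' x)))
        + ∫ x in Ioo a b, (u' x ⬝ᵥ u' x) ^ 2 :=
  energy_identity_general a b u u' u'' hderiv hderiv' hu''2 hunit
end

section
/- For every v ∈ ℝ³ and real scalar c, letting Γ(v) be the matrix with Γ(v)w = c(v × w), the vector C(v) with components Cⁱ(v) = Σ_{j,k} (∂Γ^{i,k}/∂v^j)(v) Γ^{j,k}(v) equals -2c² v. -/
/-!
`Γ(v) = c [v]_×` is linear in `v`, so `∂Γ^{i,k}/∂v^j = c (e_j × e_k)_i` is constant and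
`Cⁱ(v) = c² Σ_k Σ_j (e_j × e_k)_i (v × e_k)_j`. By cyclicity of the triple product the inner sum
is `(v × e_k) · (e_k × e_i) = v_k δ_{ki} - v_i` (Binet–Cauchy), and summing over `k` gives
`v_i - 3 v_i = -2 v_i`.
-/

open Matrix

theorem deriv_linearMap_update {𝕜 ι F : Type*} [NontriviallyNormedField 𝕜] [DecidableEq ι]
    [NormedAddCommGroup F] [NormedSpace 𝕜 F] (L : (ι → 𝕜) →ₗ[𝕜] F) (v : ι → 𝕜) (j : ι) (x : 𝕜) :
    deriv (fun s => L (Function.update v j s)) x = L (Pi.single j 1) := by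
  have h : (fun s => L (Function.update v j s))
      = fun s => L (Function.update v j 0) + s • L (Pi.single j 1) := by
    funext s
    rw [← map_smul, ← map_add, Pi.update_eq_sub_add_single j v s,
      Pi.update_eq_sub_add_single j v 0, Pi.single_zero, add_zero, ← Pi.single_smul, smul_eq_mul,
      mul_one]
  rw [h]
  exact (((hasDerivAt_id x).smul_const _).const_add _).deriv.trans (one_smul _ _)

theorem sum_sum_cross_single_mul_cross_single {R : Type*} [CommRing R] (v : Fin 3 → R) (i : Fin 3) :
    ∑ j, ∑ k, (Pi.single j 1 ⨯₃ Pi.single k 1) i * (v ⨯₃ Pi.single k 1) j = -2 * v i := by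
  have inner_sum : ∀ k, ∑ j, (Pi.single j 1 ⨯₃ Pi.single k 1) i * (v ⨯₃ Pi.single k 1) j
      = (if i = k then v k else 0) - v i := by
    intro k
    calc ∑ j, (Pi.single j 1 ⨯₃ Pi.single k 1) i * (v ⨯₃ Pi.single k 1) j
        = (v ⨯₃ Pi.single k 1) ⬝ᵥ (Pi.single k 1 ⨯₃ Pi.single i 1) := by
          rw [dotProduct_comm]
          refine Finset.sum_congr rfl fun j _ => ?_
          rw [← dotProduct_single_one (Pi.single j 1 ⨯₃ Pi.single k 1) i,
            dotProduct_comm, triple_product_permutation, single_one_dotProduct]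
      _ = _ := by
          rw [cross_dot_cross]
          simp [Pi.single_apply]
  rw [Finset.sum_comm]
  simp [inner_sum, Finset.sum_sub_distrib]
  ring

/-- For `v ∈ ℝ³` and `c ∈ ℝ`, with `Γ(v)` the matrix with `Γ(v) w = c (v × w)`, the
Itô–Stratonovich correction vector `Cⁱ(v) = Σ_{j,k} (∂Γ^{i,k}/∂v^j)(v) Γ^{j,k}(v)`
equals `-2 c² v`. -/
theorem ito_stratonovich_correction (c : ℝ) (Γ : (Fin 3 → ℝ) → Matrix (Fin 3) (Fin 3) ℝ)
    (hΓ : ∀ v w : Fin 3 → ℝ, (Γ v).mulVec w = c • crossProduct v w) (v : Fin 3 → ℝ) :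
    (fun i : Fin 3 => ∑ j : Fin 3, ∑ k : Fin 3,
        deriv (fun s : ℝ => Γ (Function.update v j s) i k) (v j) * Γ v j k)
      = (-(2 * c ^ 2)) • v := by
  have hentry : ∀ w i k, Γ w i k = c * (w ⨯₃ Pi.single k 1) i := fun w i k => by
    simpa [mulVec_single_one] using congrFun (hΓ w (Pi.single k 1)) i
  have hderiv : ∀ i j k, deriv (fun s => Γ (Function.update v j s) i k) (v j)
      = c * (Pi.single j 1 ⨯₃ Pi.single k 1) i := fun i j k => by
    simp_rw [hentry]
    exact deriv_linearMap_update (c • LinearMap.proj i ∘ₗ crossProduct.flip (Pi.single k 1)) v j _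
  funext i
  simp_rw [hderiv, hentry]
  calc ∑ j, ∑ k, c * (Pi.single j 1 ⨯₃ Pi.single k 1) i * (c * (v ⨯₃ Pi.single k 1) j)
      = c ^ 2 * ∑ j, ∑ k, (Pi.single j 1 ⨯₃ Pi.single k 1) i * (v ⨯₃ Pi.single k 1) j := by
        simp_rw [Finset.mul_sum]
        ring_nf
    _ = (-(2 * c ^ 2) • v) i := by
        rw [sum_sum_cross_single_mul_cross_single, Pi.smul_apply, smul_eq_mul]
        ring
end
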